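/- arXiv:1711.01047 — 4 statements merged into one kernel-verified Lean document; each statement's English description precedes it below -/
import Mathlib

section
/- Let 2 ≤ s ≤ t be integers and let X ⊆ [t]^k be a finite set of strings of length k over the alphabet {1,...,t} such that for any two distinct strings x, x' ∈ X and any s-element subset S ⊆ {1,...,t}, there exists a position i with x(i) ≠ x'(i) and x(i), x'(i) ∈ S. Then |X| ≤ s^(s·k/t), i.e. |X|^t ≤ s^(s·k). -/
/-!
For a set `S` of `s` symbols, send each `x ∈ X` to the cylinder of strings over `S` that agree
with `x` wherever `x` takes a value in `S`. Separation makes these cylinders disjoint, so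
`∑ₓ s ^ (k - dₛ x) ≤ s ^ k`, where `dₛ x` counts the positions at which `x` lands in `S`, and
AM–GM turns this Kraft-type inequality into `|X| ^ |X| ≤ s ^ ∑ₓ dₛ x`. Taking for `S` the `t`
cyclic windows `{j, …, j + s - 1}` of `Fin t`, every symbol lies in exactly `s` of them, so
multiplying the `t` inequalities gives `|X| ^ (t |X|) ≤ s ^ (s k |X|)`.
-/

open Finset

theorem card_pow_card_mul_prod_le_sum_pow {β : Type*} (A : Finset β) (b : β → ℕ) :
    #A ^ #A * ∏ x ∈ A, b x ≤ (∑ x ∈ A, b x) ^ #A := by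
  rcases A.eq_empty_or_nonempty with rfl | hA
  · simp
  have hn : (0 : ℝ) < #A := by exact_mod_cast hA.card_pos
  have amgm := Real.geom_mean_le_arith_mean A (fun _ ↦ 1) (fun x ↦ (b x : ℝ))
    (fun _ _ ↦ zero_le_one) (by simpa using hn) (fun _ _ ↦ by positivity)
  simp only [Real.rpow_one, sum_const, nsmul_eq_mul, mul_one, one_mul] at amgm
  rw [Real.rpow_inv_le_iff_of_pos (by positivity) (by positivity) hn, Real.rpow_natCast,
    div_pow, le_div_iff₀ (by positivity), mul_comm] at amgm
  exact_mod_cast amgm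

section Cylinder

variable {ι α : Type*} [Fintype ι] [DecidableEq ι] [DecidableEq α] (S : Finset α)

def cylinder (x : ι → α) : Finset (ι → S) :=
  Fintype.piFinset fun i ↦ if h : x i ∈ S then {⟨x i, h⟩} else univ

theorem card_cylinder (x : ι → α) : #(cylinder S x) = #S ^ #{i | x i ∉ S} := by
  simp only [cylinder, Fintype.card_piFinset, apply_dite, card_singleton, card_univ,
    Fintype.card_coe, dite_eq_ite, prod_ite, prod_const_one, one_mul, prod_const]

theorem disjoint_cylinder {x y : ι → α} (h : ∃ i, x i ≠ y i ∧ x i ∈ S ∧ y i ∈ S) :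
    Disjoint (cylinder S x) (cylinder S y) := by
  obtain ⟨i, hne, hx, hy⟩ := h
  rw [disjoint_left]
  intro f hfx hfy
  have h1 := Fintype.mem_piFinset.mp hfx i
  have h2 := Fintype.mem_piFinset.mp hfy i
  simp only [dif_pos hx, dif_pos hy, mem_singleton] at h1 h2
  exact hne (congrArg Subtype.val (h1.symm.trans h2))

variable {S} {X : Finset (ι → α)}
  (hX : ∀ x ∈ X, ∀ y ∈ X, x ≠ y → ∃ i, x i ≠ y i ∧ x i ∈ S ∧ y i ∈ S)
include hX

theorem sum_pow_card_filter_notMem_le :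
    ∑ x ∈ X, #S ^ #{i | x i ∉ S} ≤ #S ^ Fintype.card ι := by
  have hdisj : (X : Set (ι → α)).PairwiseDisjoint (cylinder S) :=
    fun x hx y hy hxy ↦ disjoint_cylinder S (hX x hx y hy hxy)
  calc ∑ x ∈ X, #S ^ #{i | x i ∉ S} = #(X.biUnion (cylinder S)) := by
        simp only [card_biUnion hdisj, card_cylinder]
    _ ≤ Fintype.card (ι → S) := card_le_univ _
    _ = #S ^ Fintype.card ι := by simp

theorem card_pow_card_le_pow_sum_card_filter_mem (hS : S.Nonempty) :
    #X ^ #X ≤ #S ^ ∑ x ∈ X, #{i | x i ∈ S} := by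
  set c : (ι → α) → ℕ := fun x ↦ #{i | x i ∉ S}
  have hsplit : ∑ x ∈ X, #{i | x i ∈ S} + ∑ x ∈ X, c x = Fintype.card ι * #X := by
    simp only [c, ← sum_add_distrib, card_filter_add_card_filter_not, card_univ, sum_const,
      smul_eq_mul, mul_comm]
  have amgm :
      #S ^ (∑ x ∈ X, c x) * #X ^ #X ≤ #S ^ (∑ x ∈ X, c x) * #S ^ ∑ x ∈ X, #{i | x i ∈ S} :=
    calc #S ^ (∑ x ∈ X, c x) * #X ^ #X = #X ^ #X * ∏ x ∈ X, #S ^ c x := by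
          rw [prod_pow_eq_pow_sum, mul_comm]
      _ ≤ (∑ x ∈ X, #S ^ c x) ^ #X := card_pow_card_mul_prod_le_sum_pow X _
      _ ≤ (#S ^ Fintype.card ι) ^ #X := Nat.pow_le_pow_left (sum_pow_card_filter_notMem_le hX) _
      _ = #S ^ (∑ x ∈ X, c x) * #S ^ ∑ x ∈ X, #{i | x i ∈ S} := by
          rw [← pow_mul, ← pow_add, ← hsplit, add_comm]
  exact Nat.le_of_mul_le_mul_left amgm (pow_pos hS.card_pos _)

end Cylinder

section SeparatingFamily

variable {ι α J : Type*} [Fintype ι] [DecidableEq α] [Fintype J]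
  {W : J → Finset α} {r : ℕ}

theorem sum_card_filter_mem_eq (hr : ∀ a, #{j | a ∈ W j} = r) (x : ι → α) :
    ∑ j, #{i | x i ∈ W j} = r * Fintype.card ι := by
  simp only [card_filter]
  rw [sum_comm]
  simp only [← card_filter, hr, sum_const, card_univ, smul_eq_mul, mul_comm]

theorem card_pow_le_of_separating [DecidableEq ι] {s : ℕ} (hs : 0 < s) (hW : ∀ j, #(W j) = s)
    (hr : ∀ a, #{j | a ∈ W j} = r) (X : Finset (ι → α))
    (hX : ∀ x ∈ X, ∀ y ∈ X, x ≠ y → ∀ j, ∃ i, x i ≠ y i ∧ x i ∈ W j ∧ y i ∈ W j) :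
    #X ^ Fintype.card J ≤ s ^ (r * Fintype.card ι) := by
  rcases X.eq_empty_or_nonempty with rfl | hX₀
  · exact (zero_pow_le_one _).trans (Nat.one_le_pow _ _ hs)
  have hWne : ∀ j, (W j).Nonempty := fun j ↦ card_pos.mp ((hW j).symm ▸ hs)
  have key : (#X ^ Fintype.card J) ^ #X ≤ (s ^ (r * Fintype.card ι)) ^ #X :=
    calc (#X ^ Fintype.card J) ^ #X = ∏ _j : J, #X ^ #X := by
          rw [prod_const, card_univ, ← pow_mul, ← pow_mul, mul_comm]
      _ ≤ ∏ j : J, s ^ ∑ x ∈ X, #{i | x i ∈ W j} := prod_le_prod' fun j _ ↦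
          hW j ▸ card_pow_card_le_pow_sum_card_filter_mem (fun x hx y hy hxy ↦ hX x hx y hy hxy j)
            (hWne j)
      _ = (s ^ (r * Fintype.card ι)) ^ #X := by
          rw [prod_pow_eq_pow_sum, sum_comm]
          simp only [sum_card_filter_mem_eq hr, sum_const, smul_eq_mul, ← pow_mul, mul_comm]
  exact (Nat.pow_le_pow_iff_left hX₀.card_pos.ne').mp key

end SeparatingFamily

def cyclicWindow {t : ℕ} (s : ℕ) (j : Fin t) : Finset (Fin t) := {a | ((a - j : Fin t) : ℕ) < s}

section CyclicWindow

variable {t s : ℕ} [NeZero t]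

theorem card_cyclicWindow (hst : s ≤ t) (j : Fin t) : #(cyclicWindow s j) = s := by
  rw [card_equiv (Equiv.subRight j) (t := ({b | (b : ℕ) < s} : Finset (Fin t)))
    (by simp [cyclicWindow]), Fin.card_filter_val_lt, min_eq_right hst]

theorem card_filter_mem_cyclicWindow (hst : s ≤ t) (a : Fin t) :
    #{j | a ∈ cyclicWindow s j} = s := by
  rw [card_equiv (Equiv.subLeft a) (t := ({b | (b : ℕ) < s} : Finset (Fin t)))
    (by simp [cyclicWindow]), Fin.card_filter_val_lt, min_eq_right hst]

end CyclicWindow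

theorem stmt_0 (s t k : ℕ) (hs : 2 ≤ s) (hst : s ≤ t)
    (X : Finset (Fin k → Fin t))
    (hX : ∀ x ∈ X, ∀ x' ∈ X, x ≠ x' →
      ∀ S : Finset (Fin t), S.card = s →
        ∃ i : Fin k, x i ≠ x' i ∧ x i ∈ S ∧ x' i ∈ S) :
    X.card ^ t ≤ s ^ (s * k) := by
  have : NeZero t := ⟨by omega⟩
  simpa using card_pow_le_of_separating (by omega) (card_cyclicWindow hst)
    (card_filter_mem_cyclicWindow hst) X
    fun x hx y hy hxy j ↦ hX x hx y hy hxy _ (card_cyclicWindow hst j)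
end

section
/- Let s ≤ t and let X ⊆ [t]^k satisfy: for any two distinct x, x' ∈ X and any s-subset S of [t], there exists a position i with x(i) ≠ x'(i) and x(i), x'(i) ∈ S. For each x ∈ X, let d_x be the number of positions i with x(i) ∉ {1,...,s}, and let X_x be the set of all strings obtained from x by arbitrarily replacing each letter outside {1,...,s} by a letter in {1,...,s}. Then the sets X_x for distinct x ∈ X are pairwise disjoint. -/
/-! Apply the hypothesis on `X` to the set of the first `s` letters: at the position it yields,
`x` and `x'` differ but both carry such a letter, so every `y ∈ X_x ∩ X_{x'}` would equal both. -/

open Finset in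
lemma Fin.card_filter_val_lt_of_le {s t : ℕ} (hst : s ≤ t) :
    #{a : Fin t | (a : ℕ) < s} = s := by
  rw [Fin.card_filter_val_lt, min_eq_right hst]

theorem stmt_1 (s t k : ℕ) (hst : s ≤ t)
    (X : Finset (Fin k → Fin t))
    (hX : ∀ x ∈ X, ∀ x' ∈ X, x ≠ x' →
      ∀ S : Finset (Fin t), S.card = s →
        ∃ i : Fin k, x i ≠ x' i ∧ x i ∈ S ∧ x' i ∈ S)
    (Xx : (Fin k → Fin t) → Set (Fin k → Fin t))
    (hXx : ∀ x, Xx x = { y | ∀ i : Fin k,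
      ((x i : ℕ) < s → y i = x i) ∧ (¬ (x i : ℕ) < s → (y i : ℕ) < s) }) :
    ∀ x ∈ X, ∀ x' ∈ X, x ≠ x' → Disjoint (Xx x) (Xx x') := by
  intro x hx x' hx' hne
  rw [Set.disjoint_left]
  intro y hy hy'
  rw [hXx] at hy hy'
  obtain ⟨i, hdiff, hi, hi'⟩ := hX x hx x' hx' hne _ (Fin.card_filter_val_lt_of_le hst)
  rw [Finset.mem_filter_univ] at hi hi'
  exact hdiff (((hy i).1 hi).symm.trans ((hy' i).1 hi'))
end

section
/- Let H be a t-edge-colored graph on vertex set V with coloring c : E(H) → [t], and suppose H contains no rainbow triangle but adding any missing edge in any color creates a rainbow triangle. Let A ⊆ V, B = V \ A, and suppose v, w ∈ B are non-adjacent and have no common neighbor in B. Assign to each v ∈ B the string x_v ∈ [t+1]^A with x_v(a) = c(va) if va ∈ E(H) and x_v(a) = t+1 otherwise. Then for any color class a₀ ∈ [t], there exists a ∈ A such that x_v(a) ≠ x_w(a), x_v(a) ≤ t, x_w(a) ≤ t, x_v(a) ≠ a₀ and x_w(a) ≠ a₀. -/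
/-!
Adding `vw` in color `a₀` creates a rainbow triangle; since `H` has none, that triangle uses
the new edge, so its third vertex `z` is a common neighbour of `v` and `w` whose two edge colors
differ from each other and from `a₀`. As `v` and `w` have no common neighbour in `B = Aᶜ`,
`z ∈ A`, and `x_v(z), x_w(z)` are these two colors.
-/

/-- An edge-colored graph has a rainbow triangle if it has three mutually
adjacent vertices whose three connecting edges receive pairwise distinct colors. -/
def HasRainbowTriangle {V : Type*} (G : SimpleGraph V) {t : ℕ}
    (c : Sym2 V → Fin t) : Prop :=
  ∃ u v w : V, G.Adj u v ∧ G.Adj v w ∧ G.Adj u w ∧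
    c s(u, v) ≠ c s(v, w) ∧ c s(u, v) ≠ c s(u, w) ∧ c s(v, w) ≠ c s(u, w)

section RainbowTriangle

variable {V α : Type*}

def IsRainbowTriangle (G : SimpleGraph V) (c : Sym2 V → α) (u v w : V) : Prop :=
  G.Adj u v ∧ G.Adj v w ∧ G.Adj u w ∧
    c s(u, v) ≠ c s(v, w) ∧ c s(u, v) ≠ c s(u, w) ∧ c s(v, w) ≠ c s(u, w)

variable {G H : SimpleGraph V} {c : Sym2 V → α} {u v w : V}

theorem hasRainbowTriangle_iff {t : ℕ} {c : Sym2 V → Fin t} :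
    HasRainbowTriangle G c ↔ ∃ u v w, IsRainbowTriangle G c u v w :=
  Iff.rfl

theorem IsRainbowTriangle.swap (h : IsRainbowTriangle G c u v w) :
    IsRainbowTriangle G c v u w := by
  obtain ⟨huv, hvw, huw, d₁, d₂, d₃⟩ := h
  rw [Sym2.eq_swap] at d₁ d₂
  exact ⟨huv.symm, huw, hvw, d₂, d₁, d₃.symm⟩

theorem IsRainbowTriangle.rotate (h : IsRainbowTriangle G c u v w) :
    IsRainbowTriangle G c v w u := by
  obtain ⟨huv, hvw, huw, d₁, d₂, d₃⟩ := h
  rw [Sym2.eq_swap (a := u) (b := w)] at d₂ d₃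
  rw [Sym2.eq_swap (a := u) (b := v)] at d₁ d₂
  exact ⟨hvw, huw.symm, huv.symm, d₃, d₁.symm, d₂.symm⟩

theorem IsRainbowTriangle.exists_of_edge_eq {p q r : V} (h : IsRainbowTriangle G c p q r)
    (he : s(v, w) = s(p, q) ∨ s(v, w) = s(q, r) ∨ s(v, w) = s(p, r)) :
    ∃ z, IsRainbowTriangle G c v w z := by
  simp only [Sym2.eq_iff] at he
  rcases he with (⟨rfl, rfl⟩ | ⟨rfl, rfl⟩) | (⟨rfl, rfl⟩ | ⟨rfl, rfl⟩) | (⟨rfl, rfl⟩ | ⟨rfl, rfl⟩)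
  · exact ⟨r, h⟩
  · exact ⟨r, h.swap⟩
  · exact ⟨p, h.rotate⟩
  · exact ⟨p, h.rotate.swap⟩
  · exact ⟨q, h.swap.rotate⟩
  · exact ⟨q, h.rotate.rotate⟩

theorem adj_of_adj_sup_fromEdgeSet_singleton {e : Sym2 V}
    (h : (H ⊔ SimpleGraph.fromEdgeSet {e}).Adj u v) (hne : s(u, v) ≠ e) : H.Adj u v := by
  simpa [hne] using h

variable [DecidableEq V] {e : Sym2 V} {a : α}

theorem IsRainbowTriangle.of_sup_edge {p q r : V}
    (h : IsRainbowTriangle (H ⊔ SimpleGraph.fromEdgeSet {e}) (Function.update c e a) p q r)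
    (hpq : s(p, q) ≠ e) (hqr : s(q, r) ≠ e) (hpr : s(p, r) ≠ e) :
    IsRainbowTriangle H c p q r := by
  obtain ⟨h₁, h₂, h₃, d₁, d₂, d₃⟩ := h
  simp only [Function.update_of_ne hpq, Function.update_of_ne hqr,
    Function.update_of_ne hpr] at d₁ d₂ d₃
  exact ⟨adj_of_adj_sup_fromEdgeSet_singleton h₁ hpq, adj_of_adj_sup_fromEdgeSet_singleton h₂ hqr,
    adj_of_adj_sup_fromEdgeSet_singleton h₃ hpr, d₁, d₂, d₃⟩

theorem IsRainbowTriangle.apex_of_sup_edge {z : V}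
    (h : IsRainbowTriangle (H ⊔ SimpleGraph.fromEdgeSet {s(v, w)})
      (Function.update c s(v, w) a) v w z) :
    H.Adj z v ∧ H.Adj z w ∧ c s(z, v) ≠ c s(z, w) ∧ c s(z, v) ≠ a ∧ c s(z, w) ≠ a := by
  obtain ⟨hvw, hwz, hvz, d₁, d₂, d₃⟩ := h
  have hwz' : s(w, z) ≠ s(v, w) := by
    rw [Sym2.eq_swap (a := v)]
    exact fun he => hvz.ne (Sym2.congr_right.mp he).symm
  have hvz' : s(v, z) ≠ s(v, w) := fun he => hwz.ne (Sym2.congr_right.mp he).symm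
  simp only [Function.update_self, Function.update_of_ne hwz', Function.update_of_ne hvz']
    at d₁ d₂ d₃
  rw [Sym2.eq_swap (a := z), Sym2.eq_swap (a := z)]
  exact ⟨(adj_of_adj_sup_fromEdgeSet_singleton hvz hvz').symm,
    (adj_of_adj_sup_fromEdgeSet_singleton hwz hwz').symm, d₃.symm, Ne.symm d₂, Ne.symm d₁⟩

end RainbowTriangle

theorem exists_rainbow_apex_of_hasRainbowTriangle_sup_edge {V : Type*} [DecidableEq V]
    {H : SimpleGraph V} {t : ℕ} {c : Sym2 V → Fin t} {v w : V} {a : Fin t}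
    (hH : ¬ HasRainbowTriangle H c)
    (h : HasRainbowTriangle (H ⊔ SimpleGraph.fromEdgeSet {s(v, w)})
      (Function.update c s(v, w) a)) :
    ∃ z, H.Adj z v ∧ H.Adj z w ∧ c s(z, v) ≠ c s(z, w) ∧ c s(z, v) ≠ a ∧ c s(z, w) ≠ a := by
  obtain ⟨p, q, r, hT⟩ := hasRainbowTriangle_iff.mp h
  have he : s(v, w) = s(p, q) ∨ s(v, w) = s(q, r) ∨ s(v, w) = s(p, r) := by
    by_contra! hne
    exact hH ⟨p, q, r, hT.of_sup_edge hne.1.symm hne.2.1.symm hne.2.2.symm⟩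
  obtain ⟨z, hz⟩ := hT.exists_of_edge_eq he
  exact ⟨z, hz.apex_of_sup_edge⟩

theorem stmt_10_general {V : Type*} [DecidableEq V] (t : ℕ)
    (H : SimpleGraph V) [DecidableRel H.Adj] (c : Sym2 V → Fin t)
    (hfree : ¬ HasRainbowTriangle H c)
    (hsat : ∀ v w : V, v ≠ w → ¬ H.Adj v w → ∀ a : Fin t,
      HasRainbowTriangle (H ⊔ SimpleGraph.fromEdgeSet {s(v, w)})
        (Function.update c s(v, w) a))
    (A : Set V) (B : Set V) (hB : B = Aᶜ)
    (x : V → V → Fin (t + 1))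
    (hx : ∀ v u : V, x v u = if h : H.Adj v u then (c s(v, u)).castSucc else Fin.last t)
    (v w : V) (hvw : v ≠ w) (hadj : ¬ H.Adj v w)
    (hcommon : ¬ ∃ u ∈ B, H.Adj u v ∧ H.Adj u w) :
    ∀ a₀ : Fin t, ∃ a ∈ A, x v a ≠ x w a ∧
      x v a ≠ Fin.last t ∧ x w a ≠ Fin.last t ∧
      x v a ≠ a₀.castSucc ∧ x w a ≠ a₀.castSucc := by
  intro a₀
  obtain ⟨z, hzv, hzw, hne, hva, hwa⟩ :=
    exists_rainbow_apex_of_hasRainbowTriangle_sup_edge hfree (hsat v w hvw hadj a₀)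
  have hzA : z ∈ A := by
    by_contra hzA
    exact hcommon ⟨z, hB ▸ hzA, hzv, hzw⟩
  have hx_of_adj {y : V} (hzy : H.Adj z y) : x y z = (c s(z, y)).castSucc := by
    rw [hx, dif_pos hzy.symm, Sym2.eq_swap]
  refine ⟨z, hzA, ?_⟩
  rw [hx_of_adj hzv, hx_of_adj hzw]
  refine ⟨?_, Fin.castSucc_ne_last _, Fin.castSucc_ne_last _, ?_, ?_⟩ <;>
    simpa only [ne_eq, Fin.castSucc_inj]

theorem stmt_10 {V : Type*} [DecidableEq V] (t : ℕ)
    (H : SimpleGraph V) [DecidableRel H.Adj] (c : Sym2 V → Fin t)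
    (hfree : ¬ HasRainbowTriangle H c)
    (hsat : ∀ v w : V, v ≠ w → ¬ H.Adj v w → ∀ a : Fin t,
      HasRainbowTriangle (H ⊔ SimpleGraph.fromEdgeSet {s(v, w)})
        (Function.update c s(v, w) a))
    (A : Set V) (B : Set V) (hB : B = Aᶜ)
    (x : V → V → Fin (t + 1))
    (hx : ∀ v u : V, x v u = if h : H.Adj v u then (c s(v, u)).castSucc else Fin.last t)
    (v w : V) (hvB : v ∈ B) (hwB : w ∈ B) (hvw : v ≠ w) (hadj : ¬ H.Adj v w)
    (hcommon : ¬ ∃ u ∈ B, H.Adj u v ∧ H.Adj u w) :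
    ∀ a₀ : Fin t, ∃ a ∈ A, x v a ≠ x w a ∧
      x v a ≠ Fin.last t ∧ x w a ≠ Fin.last t ∧
      x v a ≠ a₀.castSucc ∧ x w a ≠ a₀.castSucc :=
  stmt_10_general t H c hfree hsat A B hB x hx v w hvw hadj hcommon
end

section
/- For every s ≥ 3 and t ≥ C(s,2), rsat_t(n, K_s) ≥ (1+o(1)) · t/((t−s+2)·log(t−s+2)) · n · log n as n → ∞. -/
/-- An edge-colored graph has a rainbow copy of `K_s`: `s` mutually adjacent
vertices all of whose connecting edges receive pairwise distinct colors. -/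
def HasRainbowClique {V : Type*} (s : ℕ) (G : SimpleGraph V) {t : ℕ}
    (c : Sym2 V → Fin t) : Prop :=
  ∃ f : Fin s ↪ V, (∀ a b : Fin s, a ≠ b → G.Adj (f a) (f b)) ∧
    ∀ a b a' b' : Fin s, a ≠ b → a' ≠ b' →
      c s(f a, f b) = c s(f a', f b') → s(a, b) = s(a', b')

/-- A `t`-edge-colored graph is rainbow-`K_s`-saturated if it has no rainbow
copy of `K_s`, but adding any missing edge in any of the `t` colors creates one. -/
def RainbowCliqueSaturated {V : Type*} [DecidableEq V] (s : ℕ) (G : SimpleGraph V)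
    {t : ℕ} (c : Sym2 V → Fin t) : Prop :=
  ¬ HasRainbowClique s G c ∧
  ∀ v w : V, v ≠ w → ¬ G.Adj v w → ∀ a : Fin t,
    HasRainbowClique s (G ⊔ SimpleGraph.fromEdgeSet {s(v, w)})
      (Function.update c s(v, w) a)

/-- The rainbow saturation number `rsat_t(n, K_s)`: the minimum number of edges
of a `t`-edge-colored rainbow-`K_s`-saturated graph on `n` vertices. -/
noncomputable def rsatClique (s t n : ℕ) : ℕ :=
  sInf { m | ∃ (G : SimpleGraph (Fin n)) (c : Sym2 (Fin n) → Fin t),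
    RainbowCliqueSaturated s G c ∧ G.edgeSet.ncard = m }

open Finset

namespace RSat

variable {s t n : ℕ} (G : SimpleGraph (Fin n)) [DecidableRel G.Adj] (c : Sym2 (Fin n) → Fin t)

/-- survival predicate -/
def Surv (T : ℕ) (A : Finset (Fin t)) {β : ℕ} (φ : Fin t → Fin β)
    (σ : Fin n → Fin β) (v : Fin n) : Prop :=
  ∀ u : Fin n, G.Adj v u → T < G.degree u → c s(v, u) ∉ A → σ u = φ (c s(v, u))

instance (T : ℕ) (A : Finset (Fin t)) {β : ℕ} (φ : Fin t → Fin β)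
    (σ : Fin n → Fin β) (v : Fin n) : Decidable (Surv G c T A φ σ v) := by
  unfold Surv; infer_instance

lemma conflict (hs : 3 ≤ s)
    (hsat : RainbowCliqueSaturated s G c) {T : ℕ} {v w : Fin n}
    (hvw : v ≠ w) (hnadj : ¬ G.Adj v w)
    (hclean : ∀ u, G.Adj v u → G.Adj w u → T < G.degree u)
    {A : Finset (Fin t)} (hA : A.card = s - 2)
    {β : ℕ} {φ : Fin t → Fin β} (hφ : Set.InjOn φ {x | x ∉ A})
    {σ : Fin n → Fin β}
    (hv : Surv G c T A φ σ v) (hw : Surv G c T A φ σ w) : False := by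
  classical
  have hAne : A.Nonempty := by rw [← Finset.card_pos, hA]; omega
  obtain ⟨a, ha⟩ := hAne
  obtain ⟨f, hadj, hcol⟩ := hsat.2 v w hvw hnadj a
  have himg : (∃ i, f i = v) ∧ (∃ j, f j = w) := by
    by_contra hcon
    apply hsat.1
    refine ⟨f, ?_, ?_⟩
    · intro p q hpq
      have h := hadj p q hpq
      rw [SimpleGraph.sup_adj] at h
      rcases h with h | h
      · exact h
      · rw [SimpleGraph.fromEdgeSet_adj] at h
        exfalso
        have h2 : s(f p, f q) = s(v, w) := h.1
        rw [Sym2.eq_iff] at h2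
        rcases h2 with ⟨h1, h2⟩ | ⟨h1, h2⟩
        · exact hcon ⟨⟨p, h1⟩, ⟨q, h2⟩⟩
        · exact hcon ⟨⟨q, h2⟩, ⟨p, h1⟩⟩
    · intro a' b' a'' b'' h1 h2 hc
      apply hcol a' b' a'' b'' h1 h2
      have key : ∀ (p q : Fin s), Function.update c s(v, w) a s(f p, f q) = c s(f p, f q) := by
        intro p q
        apply Function.update_of_ne
        intro hEq
        rw [Sym2.eq_iff] at hEq
        rcases hEq with ⟨h1', h2'⟩ | ⟨h1', h2'⟩
        · exact hcon ⟨⟨p, h1'⟩, ⟨q, h2'⟩⟩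
        · exact hcon ⟨⟨q, h2'⟩, ⟨p, h1'⟩⟩
      rw [key a' b', key a'' b'']; exact hc
  obtain ⟨⟨i, hi⟩, ⟨j, hj⟩⟩ := himg
  have hij : i ≠ j := by rintro rfl; exact hvw (hi.symm.trans hj)
  set Kset : Finset (Fin s) := univ \ {i, j} with hKset
  have hKcard : Kset.card = s - 2 := by
    rw [hKset, card_sdiff_of_subset (subset_univ _), card_univ, Fintype.card_fin,
      card_insert_of_notMem (by simp [hij]), card_singleton]
  have hknotij : ∀ k ∈ Kset, k ≠ i ∧ k ≠ j := by
    intro k hk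
    rw [hKset, mem_sdiff] at hk
    have := hk.2
    simp only [mem_insert, mem_singleton] at this
    push_neg at this
    exact this
  have hfk_ne : ∀ k ∈ Kset, f k ≠ v ∧ f k ≠ w := by
    intro k hk
    obtain ⟨h1, h2⟩ := hknotij k hk
    exact ⟨by rw [← hi]; exact fun h => h1 (f.injective h),
           by rw [← hj]; exact fun h => h2 (f.injective h)⟩
  have hadjv : ∀ k ∈ Kset, G.Adj v (f k) := by
    intro k hk
    have h := hadj i k (Ne.symm (hknotij k hk).1)
    rw [hi, SimpleGraph.sup_adj] at h
    rcases h with h | h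
    · exact h
    · rw [SimpleGraph.fromEdgeSet_adj] at h
      exfalso
      have h2 : s(v, f k) = s(v, w) := h.1
      rw [Sym2.eq_iff] at h2
      rcases h2 with ⟨_, h2⟩ | ⟨h1, _⟩
      · exact (hfk_ne k hk).2 h2
      · exact hvw h1
  have hadjw : ∀ k ∈ Kset, G.Adj w (f k) := by
    intro k hk
    have h := hadj j k (Ne.symm (hknotij k hk).2)
    rw [hj, SimpleGraph.sup_adj] at h
    rcases h with h | h
    · exact h
    · rw [SimpleGraph.fromEdgeSet_adj] at h
      exfalso
      have h2 : s(w, f k) = s(v, w) := h.1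
      rw [Sym2.eq_iff] at h2
      rcases h2 with ⟨h1, _⟩ | ⟨_, h2⟩
      · exact hvw h1.symm
      · exact (hfk_ne k hk).1 h2
  -- color rewriting
  set c' := Function.update c s(v, w) a with hc'
  have hupd : ∀ k ∈ Kset, c' s(f i, f k) = c s(v, f k) ∧ c' s(f j, f k) = c s(w, f k) := by
    intro k hk
    constructor
    · rw [hi]
      apply Function.update_of_ne
      intro hEq
      rw [Sym2.eq_iff] at hEq
      rcases hEq with ⟨_, h2⟩ | ⟨h1, _⟩
      · exact (hfk_ne k hk).2 h2
      · exact hvw h1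
    · rw [hj]
      apply Function.update_of_ne
      intro hEq
      rw [Sym2.eq_iff] at hEq
      rcases hEq with ⟨h1, _⟩ | ⟨_, h2⟩
      · exact hvw h1.symm
      · exact (hfk_ne k hk).1 h2
  have hupda : c' s(f i, f j) = a := by
    rw [hi, hj, hc', Function.update_self]
  -- distinctness facts
  have hXa : ∀ k ∈ Kset, c s(v, f k) ≠ a := by
    intro k hk hEq
    have h := hcol i k i j (Ne.symm (hknotij k hk).1) hij
      (by rw [(hupd k hk).1, hupda, hEq])
    rw [Sym2.eq_iff] at h
    rcases h with ⟨_, h2⟩ | ⟨h1, h2⟩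
    · exact (hknotij k hk).2 h2
    · exact (hknotij k hk).1 h2
  have hYa : ∀ k ∈ Kset, c s(w, f k) ≠ a := by
    intro k hk hEq
    have h := hcol j k i j (Ne.symm (hknotij k hk).2) hij
      (by rw [(hupd k hk).2, hupda, hEq])
    rw [Sym2.eq_iff] at h
    rcases h with ⟨h1, _⟩ | ⟨_, h2⟩
    · exact hij (h1.symm)
    · exact (hknotij k hk).1 h2
  have hXX : ∀ k ∈ Kset, ∀ k' ∈ Kset, k ≠ k' → c s(v, f k) ≠ c s(v, f k') := by
    intro k hk k' hk' hne hEq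
    have h := hcol i k i k' (Ne.symm (hknotij k hk).1) (Ne.symm (hknotij k' hk').1)
      (by rw [(hupd k hk).1, (hupd k' hk').1, hEq])
    rw [Sym2.eq_iff] at h
    rcases h with ⟨_, h2⟩ | ⟨h1, _⟩
    · exact hne h2
    · exact (hknotij k' hk').1 h1.symm
  have hYY : ∀ k ∈ Kset, ∀ k' ∈ Kset, k ≠ k' → c s(w, f k) ≠ c s(w, f k') := by
    intro k hk k' hk' hne hEq
    have h := hcol j k j k' (Ne.symm (hknotij k hk).2) (Ne.symm (hknotij k' hk').2)
      (by rw [(hupd k hk).2, (hupd k' hk').2, hEq])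
    rw [Sym2.eq_iff] at h
    rcases h with ⟨_, h2⟩ | ⟨h1, _⟩
    · exact hne h2
    · exact (hknotij k' hk').2 h1.symm
  have hXY : ∀ k ∈ Kset, ∀ k' ∈ Kset, c s(v, f k) ≠ c s(w, f k') := by
    intro k hk k' hk' hEq
    have h := hcol i k j k' (Ne.symm (hknotij k hk).1) (Ne.symm (hknotij k' hk').2)
      (by rw [(hupd k hk).1, (hupd k' hk').2, hEq])
    rw [Sym2.eq_iff] at h
    rcases h with ⟨h1, _⟩ | ⟨h1, _⟩
    · exact hij h1
    · exact (hknotij k' hk').1 h1.symm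
  -- pigeonhole: find k with both colors outside A
  have hgood : ∃ k ∈ Kset, c s(v, f k) ∉ A ∧ c s(w, f k) ∉ A := by
    by_contra hbad
    push_neg at hbad
    set F : Fin s → Fin t := fun k => if c s(v, f k) ∈ A then c s(v, f k) else c s(w, f k) with hF
    have hmaps : ∀ k ∈ Kset, F k ∈ A.erase a := by
      intro k hk
      rw [Finset.mem_erase]
      by_cases hxk : c s(v, f k) ∈ A
      · simp only [hF, if_pos hxk]
        exact ⟨hXa k hk, hxk⟩
      · simp only [hF, if_neg hxk]
        exact ⟨hYa k hk, hbad k hk hxk⟩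
    have hinj : Set.InjOn F ↑Kset := by
      intro k hk k' hk' hEq
      rw [Finset.mem_coe] at hk hk'
      by_contra hne
      simp only [hF] at hEq
      by_cases h1 : c s(v, f k) ∈ A <;> by_cases h2 : c s(v, f k') ∈ A
      · rw [if_pos h1, if_pos h2] at hEq; exact hXX k hk k' hk' hne hEq
      · rw [if_pos h1, if_neg h2] at hEq; exact hXY k hk k' hk' hEq
      · rw [if_neg h1, if_pos h2] at hEq; exact hXY k' hk' k hk hEq.symm
      · rw [if_neg h1, if_neg h2] at hEq; exact hYY k hk k' hk' hne hEq
    have hle := Finset.card_le_card_of_injOn F hmaps hinj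
    rw [hKcard, Finset.card_erase_of_mem ha, hA] at hle
    omega
  obtain ⟨k, hk, hXA, hYA⟩ := hgood
  have hdegk : T < G.degree (f k) := hclean _ (hadjv k hk) (hadjw k hk)
  have e1 := hv (f k) (hadjv k hk) hdegk hXA
  have e2 := hw (f k) (hadjw k hk) hdegk hYA
  have hEq : c s(v, f k) = c s(w, f k) := hφ hXA hYA (by rw [← e1, ← e2])
  exact hXY k hk k hk hEq
def lowSet (T : ℕ) : Finset (Fin n) := univ.filter (fun v => G.degree v ≤ T)

lemma survivors_card_le (hs : 3 ≤ s) (hsat : RainbowCliqueSaturated s G c) (T : ℕ)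
    {A : Finset (Fin t)} (hA : A.card = s - 2)
    {β : ℕ} {φ : Fin t → Fin β} (hφ : Set.InjOn φ {x | x ∉ A})
    (σ : Fin n → Fin β) :
    ((lowSet G T).filter (Surv G c T A φ σ)).card ≤ T * T + T + 1 := by
  by_cases hne : ((lowSet G T).filter (Surv G c T A φ σ)).Nonempty
  · obtain ⟨v₀, hv₀⟩ := hne
    rw [mem_filter] at hv₀
    have hv₀low : G.degree v₀ ≤ T := by
      have := hv₀.1; rw [lowSet, mem_filter] at this; exact this.2
    have hsub : (lowSet G T).filter (Surv G c T A φ σ) ⊆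
        insert v₀ (G.neighborFinset v₀ ∪
          ((G.neighborFinset v₀).filter (fun u => G.degree u ≤ T)).biUnion
            (fun u => G.neighborFinset u)) := by
      intro w hw
      rw [mem_filter] at hw
      rw [mem_insert]
      by_cases hwv : w = v₀
      · exact Or.inl hwv
      refine Or.inr ?_
      rw [mem_union]
      by_cases hadj : G.Adj v₀ w
      · exact Or.inl (by rwa [SimpleGraph.mem_neighborFinset])
      refine Or.inr ?_
      by_cases hcl : ∃ u, G.Adj v₀ u ∧ G.Adj w u ∧ G.degree u ≤ T
      · obtain ⟨u, h1, h2, h3⟩ := hcl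
        rw [mem_biUnion]
        refine ⟨u, ?_, by rw [SimpleGraph.mem_neighborFinset]; exact h2.symm⟩
        rw [mem_filter, SimpleGraph.mem_neighborFinset]
        exact ⟨h1, h3⟩
      · exfalso
        push_neg at hcl
        exact conflict G c hs hsat (fun h => hwv h.symm) hadj
          (fun u h1 h2 => hcl u h1 h2) hA hφ hv₀.2 hw.2
    have hcard := card_le_card hsub
    have h1 : (G.neighborFinset v₀).card ≤ T := by
      rwa [SimpleGraph.card_neighborFinset_eq_degree]
    have h2 : (((G.neighborFinset v₀).filter (fun u => G.degree u ≤ T)).biUnion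
        (fun u => G.neighborFinset u)).card ≤ T * T := by
      refine le_trans (card_biUnion_le) ?_
      have : ∀ u ∈ (G.neighborFinset v₀).filter (fun u => G.degree u ≤ T),
          (G.neighborFinset u).card ≤ T := by
        intro u hu
        rw [mem_filter] at hu
        rw [SimpleGraph.card_neighborFinset_eq_degree]
        exact hu.2
      refine le_trans (Finset.sum_le_card_nsmul _ _ T this) ?_
      rw [smul_eq_mul]
      have : ((G.neighborFinset v₀).filter (fun u => G.degree u ≤ T)).card ≤ T :=
        le_trans (card_le_card (filter_subset _ _)) h1
      exact Nat.mul_le_mul_right T this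
    calc ((lowSet G T).filter (Surv G c T A φ σ)).card
        ≤ _ := hcard
      _ ≤ (G.neighborFinset v₀ ∪ _).card + 1 := card_insert_le _ _
      _ ≤ ((G.neighborFinset v₀).card + _) + 1 := by
          exact Nat.add_le_add_right (card_union_le _ _) 1
      _ ≤ (T + T * T) + 1 := by exact Nat.add_le_add_right (Nat.add_le_add h1 h2) 1
      _ = T * T + T + 1 := by ring
  · rw [Finset.not_nonempty_iff_eq_empty] at hne
    rw [hne]; simp
def NH (T : ℕ) (v : Fin n) : Finset (Fin n) :=
  (G.neighborFinset v).filter (fun u => T < G.degree u)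

def mA (T : ℕ) (A : Finset (Fin t)) (v : Fin n) : ℕ :=
  ((NH G T v).filter (fun u => c s(v, u) ∈ A)).card

-- count of sigmas making v survive
lemma surv_count_ge (T : ℕ) (A : Finset (Fin t)) {β : ℕ} (hβ : 1 ≤ β)
    (φ : Fin t → Fin β) (v : Fin n) :
    β ^ (n - ((NH G T v).card - mA G c T A v)) ≤
      ((univ : Finset (Fin n → Fin β)).filter (fun σ => Surv G c T A φ σ v)).card := by
  classical
  set U : Finset (Fin n) := (NH G T v).filter (fun u => c s(v, u) ∉ A) with hU
  have hUcard : U.card = (NH G T v).card - mA G c T A v := by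
    have hU2 : U = NH G T v \ ((NH G T v).filter (fun u => c s(v, u) ∈ A)) := by
      rw [hU, Finset.filter_not]
    rw [hU2, card_sdiff_of_subset (filter_subset _ _), mA]
  have hne : Nonempty (Fin β) := ⟨⟨0, hβ⟩⟩
  set P : Finset (Fin n → Fin β) := Fintype.piFinset
    (fun u => if u ∈ U then ({φ (c s(v, u))} : Finset (Fin β)) else univ) with hP
  have hsub : P ⊆ (univ : Finset (Fin n → Fin β)).filter (fun σ => Surv G c T A φ σ v) := by
    intro σ hσ
    rw [Fintype.mem_piFinset] at hσ
    rw [mem_filter]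
    refine ⟨mem_univ _, ?_⟩
    intro u hadj hdeg hcA
    have hmem : u ∈ U := by
      rw [hU, mem_filter, NH, mem_filter, SimpleGraph.mem_neighborFinset]
      exact ⟨⟨hadj, hdeg⟩, hcA⟩
    have := hσ u
    rw [if_pos hmem, mem_singleton] at this
    exact this
  have hcardP : P.card = β ^ (n - U.card) := by
    rw [hP, Fintype.card_piFinset]
    have : ∀ u : Fin n, ((if u ∈ U then ({φ (c s(v, u))} : Finset (Fin β)) else univ)).card
        = if u ∈ U then 1 else β := by
      intro u
      by_cases h : u ∈ U
      · rw [if_pos h, if_pos h, card_singleton]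
      · rw [if_neg h, if_neg h, card_univ, Fintype.card_fin]
    rw [Finset.prod_congr rfl (fun u _ => this u)]
    have hsplit := Finset.prod_sdiff (h := subset_univ U) (f := fun u => if u ∈ U then (1:ℕ) else β)
    rw [← hsplit]
    have e1 : ∏ u ∈ U, (if u ∈ U then (1:ℕ) else β) = 1 :=
      Finset.prod_eq_one (fun u hu => if_pos hu)
    have e2 : ∏ u ∈ univ \ U, (if u ∈ U then (1:ℕ) else β) = β ^ (n - U.card) := by
      rw [Finset.prod_congr rfl (fun u hu => if_neg (by rw [mem_sdiff] at hu; exact hu.2)),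
        Finset.prod_const, card_sdiff_of_subset (subset_univ U), card_univ, Fintype.card_fin]
    rw [e1, e2, mul_one]
  have hfin := card_le_card hsub
  rw [hcardP, hUcard] at hfin
  exact hfin


lemma bad_generic (T K : ℕ) (A : Finset (Fin t)) {β : ℕ} (hβ : 1 ≤ β)
    (φ : Fin t → Fin β) (hKn : K ≤ n) {B : ℕ}
    (hsurv : ∀ σ : Fin n → Fin β, ((lowSet G T).filter (Surv G c T A φ σ)).card ≤ B)
    (S : Finset (Fin n)) (hS : S ⊆ lowSet G T)
    (hK : ∀ v ∈ S, (NH G T v).card - mA G c T A v ≤ K) :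
    S.card ≤ B * β ^ K := by
  classical
  have h1 : ∀ v ∈ S, β ^ (n - K) ≤
      ((univ : Finset (Fin n → Fin β)).filter (fun σ => Surv G c T A φ σ v)).card := by
    intro v hv
    refine le_trans (Nat.pow_le_pow_right hβ ?_) (surv_count_ge G c T A hβ φ v)
    have := hK v hv; omega
  have h2 : S.card * β ^ (n - K) ≤
      ∑ v ∈ S, ((univ : Finset (Fin n → Fin β)).filter (fun σ => Surv G c T A φ σ v)).card := by
    calc S.card * β ^ (n-K) = ∑ _v ∈ S, β ^ (n-K) := by rw [Finset.sum_const, smul_eq_mul]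
    _ ≤ _ := Finset.sum_le_sum h1
  have h3 : ∑ v ∈ S, ((univ : Finset (Fin n → Fin β)).filter (fun σ => Surv G c T A φ σ v)).card
      = ∑ σ ∈ (univ : Finset (Fin n → Fin β)), (S.filter (fun v => Surv G c T A φ σ v)).card := by
    rw [Finset.sum_congr rfl (fun v _ => Finset.card_filter _ _),
      Finset.sum_congr rfl (fun σ _ => Finset.card_filter _ _)]
    exact Finset.sum_comm
  have h4 : ∑ σ ∈ (univ : Finset (Fin n → Fin β)), (S.filter (fun v => Surv G c T A φ σ v)).card
      ≤ β ^ n * B := by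
    have hb : ∀ σ ∈ (univ : Finset (Fin n → Fin β)),
        (S.filter (fun v => Surv G c T A φ σ v)).card ≤ B := by
      intro σ _
      exact le_trans (card_le_card (filter_subset_filter _ hS)) (hsurv σ)
    refine le_trans (Finset.sum_le_card_nsmul _ _ B hb) ?_
    rw [smul_eq_mul, card_univ, Fintype.card_fun, Fintype.card_fin, Fintype.card_fin]
  have h5 : S.card * β ^ (n - K) ≤ (B * β ^ K) * β ^ (n - K) := by
    have : β ^ n = β ^ K * β ^ (n - K) := by
      rw [← pow_add]
      congr 1
      omega
    calc S.card * β ^ (n-K) ≤ β ^ n * B := le_trans h2 (le_trans (le_of_eq h3) h4)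
    _ = (B * β ^ K) * β ^ (n - K) := by rw [this]; ring
  exact Nat.le_of_mul_le_mul_right h5 (Nat.pow_pos hβ)

lemma count_containing (hs3 : 3 ≤ s) (hst : s ≤ t) (x : Fin t) :
    ((powersetCard (s-2) (univ : Finset (Fin t))).filter (fun A => x ∈ A)).card
      = Nat.choose (t-1) (s-3) := by
  classical
  have hcard : ((univ : Finset (Fin t)).erase x).card = t - 1 := by
    rw [card_erase_of_mem (mem_univ x), card_univ, Fintype.card_fin]
  rw [← hcard, ← Finset.card_powersetCard (s-3) ((univ : Finset (Fin t)).erase x)]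
  apply Finset.card_bij (fun A _ => A.erase x)
  · intro A hA
    rw [mem_filter, mem_powersetCard] at hA
    rw [mem_powersetCard]
    constructor
    · intro y hy
      rw [mem_erase] at hy ⊢
      exact ⟨hy.1, mem_univ y⟩
    · rw [card_erase_of_mem hA.2, hA.1.2]
      omega
  · intro A hA A' hA' hEq
    rw [mem_filter] at hA hA'
    rw [← Finset.insert_erase hA.2, ← Finset.insert_erase hA'.2, hEq]
  · intro B hB
    rw [mem_powersetCard] at hB
    have hxB : x ∉ B := by
      intro h
      have := hB.1 h
      rw [mem_erase] at this
      exact this.1 rfl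
    refine ⟨insert x B, ?_, ?_⟩
    · rw [mem_filter, mem_powersetCard]
      refine ⟨⟨subset_univ _, ?_⟩, mem_insert_self x B⟩
      rw [card_insert_of_notMem hxB, hB.2]
      omega
    · exact Finset.erase_insert hxB

lemma exists_heavy_A (hs3 : 3 ≤ s) (hst : s ≤ t) (T : ℕ) (v : Fin n) :
    ∃ A ∈ powersetCard (s-2) (univ : Finset (Fin t)),
      (s-2) * (NH G T v).card ≤ t * mA G c T A v := by
  classical
  have hsum : ∑ A ∈ powersetCard (s-2) (univ : Finset (Fin t)), mA G c T A v
      = (NH G T v).card * Nat.choose (t-1) (s-3) := by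
    unfold mA
    rw [Finset.sum_congr rfl (fun A _ => Finset.card_filter _ _), Finset.sum_comm]
    have hxcount : ∀ u ∈ NH G T v,
        (∑ A ∈ powersetCard (s-2) (univ : Finset (Fin t)),
          if c s(v, u) ∈ A then (1:ℕ) else 0) = Nat.choose (t-1) (s-3) := by
      intro u _
      rw [← Finset.card_filter]
      exact count_containing hs3 hst (c s(v, u))
    rw [Finset.sum_congr rfl hxcount, Finset.sum_const, smul_eq_mul]
  have hAne : (powersetCard (s-2) (univ : Finset (Fin t))).Nonempty := by
    rw [← card_pos, Finset.card_powersetCard, card_univ, Fintype.card_fin]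
    exact Nat.choose_pos (by omega)
  have hsums : ∑ A ∈ powersetCard (s-2) (univ : Finset (Fin t)),
        ((NH G T v).card * Nat.choose (t-1) (s-3))
      ≤ ∑ A ∈ powersetCard (s-2) (univ : Finset (Fin t)),
        (Nat.choose t (s-2) * mA G c T A v) := by
    rw [Finset.sum_const, smul_eq_mul, ← Finset.mul_sum, hsum,
      Finset.card_powersetCard, card_univ, Fintype.card_fin]
  obtain ⟨A, hA, hle⟩ := Finset.exists_le_of_sum_le hAne hsums
  refine ⟨A, hA, ?_⟩
  have hCpos : 0 < Nat.choose t (s-2) := Nat.choose_pos (by omega)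
  have hid : t * Nat.choose (t-1) (s-3) = Nat.choose t (s-2) * (s-2) := by
    have h := Nat.add_one_mul_choose_eq (t-1) (s-3)
    have e1 : t - 1 + 1 = t := by omega
    have e2 : s - 3 + 1 = s - 2 := by omega
    rw [e1, e2] at h
    exact h
  have h2 : Nat.choose t (s-2) * ((s-2) * (NH G T v).card)
      ≤ Nat.choose t (s-2) * (t * mA G c T A v) := by
    have e1 : Nat.choose t (s-2) * ((s-2) * (NH G T v).card)
        = t * ((NH G T v).card * Nat.choose (t-1) (s-3)) := by
      calc Nat.choose t (s-2) * ((s-2) * (NH G T v).card)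
          = (Nat.choose t (s-2) * (s-2)) * (NH G T v).card := by ring
        _ = (t * Nat.choose (t-1) (s-3)) * (NH G T v).card := by rw [hid]
        _ = t * ((NH G T v).card * Nat.choose (t-1) (s-3)) := by ring
    have e2 : Nat.choose t (s-2) * (t * mA G c T A v)
        = t * (Nat.choose t (s-2) * mA G c T A v) := by ring
    rw [e1, e2]
    exact Nat.mul_le_mul_left t hle
  exact Nat.le_of_mul_le_mul_left h2 hCpos
lemma low_high_edges (T : ℕ) :
    ∑ v ∈ lowSet G T, (NH G T v).card ≤ G.edgeFinset.card := by
  classical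
  rw [← Finset.card_sigma]
  apply Finset.card_le_card_of_injOn (fun p => s(p.1, p.2))
  · rintro ⟨v, u⟩ hp
    rw [Finset.mem_coe, Finset.mem_sigma] at hp
    have hu := hp.2
    rw [NH, mem_filter, SimpleGraph.mem_neighborFinset] at hu
    simp only [Finset.mem_coe, SimpleGraph.mem_edgeFinset, SimpleGraph.mem_edgeSet]
    exact hu.1
  · rintro ⟨v, u⟩ hp ⟨v', u'⟩ hp' hEq
    rw [Finset.mem_coe, Finset.mem_sigma] at hp hp'
    have hv := hp.1
    have hu := hp.2
    have hv' := hp'.1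
    have hu' := hp'.2
    rw [lowSet, mem_filter] at hv hv'
    rw [NH, mem_filter] at hu hu'
    simp only [Sym2.eq_iff] at hEq
    rcases hEq with ⟨h1, h2⟩ | ⟨h1, h2⟩
    · subst h1; subst h2; rfl
    · exfalso
      -- v = u' has high degree but v is low
      subst h1
      exact absurd hv.2 (not_le.mpr hu'.2)

lemma high_card_bound (T : ℕ) :
    (T + 1) * (univ.filter (fun v => T < G.degree v)).card ≤ 2 * G.edgeFinset.card := by
  classical
  have h1 : ∀ v ∈ univ.filter (fun v => T < G.degree v), T + 1 ≤ G.degree v := by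
    intro v hv
    rw [mem_filter] at hv
    omega
  have h2 := Finset.card_nsmul_le_sum _ _ _ h1
  rw [smul_eq_mul, mul_comm] at h2
  refine le_trans h2 ?_
  rw [← SimpleGraph.sum_degrees_eq_twice_card_edges]
  exact Finset.sum_le_sum_of_subset (subset_univ _)

lemma low_high_partition (T : ℕ) :
    (lowSet G T).card + (univ.filter (fun v => T < G.degree v)).card = n := by
  classical
  have heq : (univ.filter (fun v => ¬ G.degree v ≤ T)) = univ.filter (fun v => T < G.degree v) := by
    apply Finset.filter_congr
    intro v _
    simp [not_le]
  rw [← heq, lowSet]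
  rw [Finset.card_filter_add_card_filter_not, card_univ, Fintype.card_fin]

lemma good_bad_partition (T k₀ : ℕ) :
    ((lowSet G T).filter (fun v => (NH G T v).card ≤ k₀)).card
      + ((lowSet G T).filter (fun v => k₀ < (NH G T v).card)).card = (lowSet G T).card := by
  classical
  have heq : ((lowSet G T).filter (fun v => ¬ (NH G T v).card ≤ k₀))
      = (lowSet G T).filter (fun v => k₀ < (NH G T v).card) := by
    apply Finset.filter_congr
    intro v _
    simp [not_le]
  rw [← heq, Finset.card_filter_add_card_filter_not]

lemma good_edges (T k₀ : ℕ) :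
    (k₀ + 1) * ((lowSet G T).filter (fun v => k₀ < (NH G T v).card)).card
      ≤ G.edgeFinset.card := by
  classical
  have h1 : ∀ v ∈ (lowSet G T).filter (fun v => k₀ < (NH G T v).card),
      k₀ + 1 ≤ (NH G T v).card := by
    intro v hv; rw [mem_filter] at hv; omega
  have h2 := Finset.card_nsmul_le_sum _ _ _ h1
  rw [smul_eq_mul, mul_comm] at h2
  refine le_trans h2 (le_trans ?_ (low_high_edges G T))
  exact Finset.sum_le_sum_of_subset (filter_subset _ _)

-- the injection off A
noncomputable def phiA {β : ℕ} (hβ : 0 < β) (A : Finset (Fin t))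
    (h : ((univ : Finset (Fin t)) \ A).card = β) : Fin t → Fin β :=
  fun x => if hx : x ∈ (univ : Finset (Fin t)) \ A then (Finset.equivFinOfCardEq h) ⟨x, hx⟩
    else ⟨0, hβ⟩

lemma phiA_injOn {β : ℕ} (hβ : 0 < β) (A : Finset (Fin t))
    (h : ((univ : Finset (Fin t)) \ A).card = β) :
    Set.InjOn (phiA hβ A h) {x | x ∉ A} := by
  intro x hx y hy hEq
  have hx' : x ∈ (univ : Finset (Fin t)) \ A := by rw [mem_sdiff]; exact ⟨mem_univ _, hx⟩
  have hy' : y ∈ (univ : Finset (Fin t)) \ A := by rw [mem_sdiff]; exact ⟨mem_univ _, hy⟩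
  simp only [phiA] at hEq
  rw [dif_pos hx', dif_pos hy'] at hEq
  have := (Finset.equivFinOfCardEq h).injective hEq
  exact Subtype.mk_eq_mk.mp this

lemma main_nat (hs : 3 ≤ s) (hst : s ≤ t)
    (hsat : RainbowCliqueSaturated s G c) (T k₀ : ℕ)
    (hKn : (t - (s-2)) * k₀ / t ≤ n) :
    ∃ H Bd Gd : ℕ,
      n = H + Bd + Gd ∧
      (T + 1) * H ≤ 2 * G.edgeFinset.card ∧
      Bd ≤ Nat.choose t (s-2) * ((T*T+T+1) * (t-(s-2)) ^ ((t-(s-2)) * k₀ / t)) ∧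
      (k₀ + 1) * Gd ≤ G.edgeFinset.card := by
  classical
  set β := t - (s-2) with hβdef
  have hβ2 : 2 ≤ β := by omega
  have hβ1 : 1 ≤ β := by omega
  have hβ0 : 0 < β := by omega
  set K := β * k₀ / t with hKdef
  set Bdset := (lowSet G T).filter (fun v => (NH G T v).card ≤ k₀) with hBdset
  refine ⟨(univ.filter (fun v => T < G.degree v)).card, Bdset.card,
    ((lowSet G T).filter (fun v => k₀ < (NH G T v).card)).card, ?_, ?_, ?_, ?_⟩
  · have h1 := low_high_partition G T
    have h2 := good_bad_partition G T k₀
    rw [← hBdset] at h2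
    omega
  · exact high_card_bound G T
  · -- the core bound
    have hsub : Bdset ⊆ (powersetCard (s-2) (univ : Finset (Fin t))).biUnion
        (fun A => Bdset.filter (fun v => (s-2) * (NH G T v).card ≤ t * mA G c T A v)) := by
      intro v hv
      rw [mem_biUnion]
      obtain ⟨A, hA, hheavy⟩ := exists_heavy_A G c hs hst T v
      exact ⟨A, hA, by rw [mem_filter]; exact ⟨hv, hheavy⟩⟩
    refine le_trans (card_le_card hsub) (le_trans card_biUnion_le ?_)
    have hKbound : ∀ A ∈ powersetCard (s-2) (univ : Finset (Fin t)),
        (Bdset.filter (fun v => (s-2) * (NH G T v).card ≤ t * mA G c T A v)).card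
          ≤ (T*T+T+1) * β ^ K := by
      intro A hApc
      rw [mem_powersetCard] at hApc
      have hA : A.card = s - 2 := hApc.2
      have hAc : ((univ : Finset (Fin t)) \ A).card = β := by
        rw [card_sdiff_of_subset (subset_univ _), card_univ, Fintype.card_fin, hA]
      refine bad_generic G c T K A hβ1 (phiA hβ0 A hAc) ?_
        (hsurv := fun σ => survivors_card_le G c hs hsat T hA (phiA_injOn hβ0 A hAc) σ)
        _ (le_trans (filter_subset _ _) (filter_subset _ _)) ?_
      · exact hKn
      · intro v hv
        rw [mem_filter] at hv
        have h2 : (NH G T v).card ≤ k₀ := (mem_filter.mp hv.1).2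
        have h1 : (s-2) * (NH G T v).card ≤ t * mA G c T A v := hv.2
        have hm : mA G c T A v ≤ (NH G T v).card := card_filter_le _ _
        rw [hKdef, Nat.le_div_iff_mul_le (show 0 < t by omega)]
        set a := (NH G T v).card
        set m := mA G c T A v
        calc (a - m) * t = a * t - m * t := by rw [Nat.sub_mul]
          _ ≤ a * t - (s-2) * a := by
              refine Nat.sub_le_sub_left ?_ _
              rw [mul_comm m t]; exact h1
          _ = β * a := by rw [hβdef, Nat.sub_mul t (s-2) a, mul_comm a t]
          _ ≤ β * k₀ := Nat.mul_le_mul_left _ h2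
    refine le_trans (Finset.sum_le_card_nsmul _ _ _ hKbound) ?_
    rw [smul_eq_mul, Finset.card_powersetCard, card_univ, Fintype.card_fin]
  · exact good_edges G T k₀

end RSat

lemma sat_top {s t : ℕ} (hs : 3 ≤ s) (ht : 0 < t) (n : ℕ) :
    RainbowCliqueSaturated s (⊤ : SimpleGraph (Fin n)) (fun _ => (⟨0, ht⟩ : Fin t)) := by
  constructor
  · rintro ⟨f, hadj, hcol⟩
    have h01 : (⟨0, by omega⟩ : Fin s) ≠ ⟨1, by omega⟩ := by
      intro h; rw [Fin.mk.injEq] at h; omega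
    have h02 : (⟨0, by omega⟩ : Fin s) ≠ ⟨2, by omega⟩ := by
      intro h; rw [Fin.mk.injEq] at h; omega
    have := hcol ⟨0, by omega⟩ ⟨1, by omega⟩ ⟨0, by omega⟩ ⟨2, by omega⟩ h01 h02 rfl
    rw [Sym2.eq_iff] at this
    rcases this with ⟨h1, h2⟩ | ⟨h1, h2⟩ <;> rw [Fin.mk.injEq] at h1 h2 <;> omega
  · intro v w hne hnadj a
    exact absurd ((SimpleGraph.top_adj v w).mpr hne) hnadj

set_option maxHeartbeats 1000000 in
theorem stmt_18 (s t : ℕ) (hs : 3 ≤ s) (hts : s * (s - 1) / 2 ≤ t)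
    (ε : ℝ) (hε : 0 < ε) :
    ∃ N : ℕ, ∀ n : ℕ, N ≤ n →
      (1 - ε) * ((t : ℝ) / (((t : ℝ) - s + 2) * Real.log ((t : ℝ) - s + 2))) *
          n * Real.log n ≤ (rsatClique s t n : ℝ) := by
  classical
  -- basic numeric facts
  have hst : s ≤ t := by
    have h2 : s * 2 ≤ s * (s - 1) := Nat.mul_le_mul_left s (by omega)
    have h3 : s ≤ s * (s-1) / 2 := by
      rw [Nat.le_div_iff_mul_le (by norm_num)]
      omega
    omega
  have ht0 : 0 < t := by omega
  set β : ℕ := t - (s - 2) with hβdef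
  have hβ2 : 2 ≤ β := by omega
  have hβR : (2:ℝ) ≤ (β:ℝ) := by exact_mod_cast hβ2
  have hcastβ : ((β:ℕ):ℝ) = (t : ℝ) - s + 2 := by
    have h1 : (s:ℕ) - 2 ≤ t := by omega
    have h2 : (2:ℕ) ≤ s := by omega
    push_cast [hβdef, Nat.cast_sub h1, Nat.cast_sub h2]
    ring
  have hlogβ : 0 < Real.log β := Real.log_pos (by linarith)
  set C : ℝ := (t:ℝ) / ((β:ℝ) * Real.log β) with hCdef
  have hC0 : 0 < C := by
    apply div_pos (by exact_mod_cast ht0)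
    positivity
  have hCβ : C * ((β:ℝ) * Real.log β) = (t:ℝ) := by
    rw [hCdef]
    field_simp
  -- rewrite the goal constant
  have hgoalC : ∀ n : ℕ, (1 - ε) * ((t : ℝ) / (((t : ℝ) - s + 2) * Real.log ((t : ℝ) - s + 2))) *
          n * Real.log n = (1-ε) * C * n * Real.log n := by
    intro n
    rw [hCdef, hcastβ]
  -- trivial case ε ≥ 1
  rcases le_or_gt 1 ε with hε1 | hε1
  · refine ⟨1, fun n hn => ?_⟩
    rw [hgoalC]
    have h1 : 1 - ε ≤ 0 := by linarith
    have hn1 : (1:ℝ) ≤ n := by exact_mod_cast hn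
    have hlog : 0 ≤ Real.log n := Real.log_nonneg hn1
    have : (1-ε) * C * n * Real.log n ≤ 0 := by
      have := mul_nonneg (mul_nonneg hC0.le (by linarith : (0:ℝ) ≤ (n:ℝ))) hlog
      nlinarith
    exact le_trans this (by positivity)
  -- main case
  set C₁ : ℝ := (Nat.choose t (s-2) : ℝ) with hC₁def
  have hC₁0 : 0 ≤ C₁ := by positivity
  -- eventual facts
  have tendN : Filter.Tendsto (fun n : ℕ => (n:ℝ)) Filter.atTop Filter.atTop :=
    tendsto_natCast_atTop_atTop
  have ev1 : ∀ᶠ n : ℕ in Filter.atTop, 1 ≤ n := Filter.eventually_ge_atTop 1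
  have ev2 : ∀ᶠ n : ℕ in Filter.atTop,
      24*(C₁+1)/ε ≤ (n:ℝ) ^ ((3*ε/8 : ℝ)) := by
    have h := (tendsto_rpow_atTop (by linarith : (0:ℝ) < 3*ε/8)).comp tendN
    exact h.eventually_ge_atTop _
  have ev3 : ∀ᶠ n : ℕ in Filter.atTop,
      Real.log n ≤ (ε/(8*(2*C+1))) * (n:ℝ) ^ ((ε/16 : ℝ)) := by
    have h := (isLittleO_log_rpow_atTop (by linarith : (0:ℝ) < ε/16)).def
      (by positivity : (0:ℝ) < ε/(8*(2*C+1)))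
    filter_upwards [tendN.eventually h, ev1] with n hn hn1
    have h1 : |Real.log (n:ℝ)| ≤ (ε/(8*(2*C+1))) * |(n:ℝ) ^ ((ε/16:ℝ))| := by
      simpa [Real.norm_eq_abs] using hn
    calc Real.log n ≤ |Real.log n| := le_abs_self _
      _ ≤ (ε/(8*(2*C+1))) * |(n:ℝ) ^ ((ε/16:ℝ))| := h1
      _ = (ε/(8*(2*C+1))) * (n:ℝ) ^ ((ε/16:ℝ)) := by
          rw [abs_of_nonneg (Real.rpow_nonneg (Nat.cast_nonneg n) _)]
  have ev4 : ∀ᶠ n : ℕ in Filter.atTop, 4/(ε*C) + 1 ≤ Real.log n := by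
    have h := Real.tendsto_log_atTop.comp tendN
    exact h.eventually_ge_atTop _
  have ev5 : ∀ᶠ n : ℕ in Filter.atTop, Real.log n ≤ (n:ℝ)/(C+1) := by
    have h := (Real.isLittleO_log_id_atTop).def
      (by positivity : (0:ℝ) < 1/(C+1))
    filter_upwards [tendN.eventually h, ev1] with n hn hn1
    have h1 : |Real.log (n:ℝ)| ≤ (1/(C+1)) * |(n:ℝ)| := by
      simpa [Real.norm_eq_abs] using hn
    calc Real.log n ≤ |Real.log n| := le_abs_self _
      _ ≤ (1/(C+1)) * |(n:ℝ)| := h1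
      _ = (n:ℝ)/(C+1) := by
          rw [abs_of_nonneg (Nat.cast_nonneg n)]; ring
  obtain ⟨N, hN⟩ := Filter.eventually_atTop.mp (((ev1.and ev2).and (ev3.and ev4)).and ev5)
  refine ⟨N + 1, fun n hn => ?_⟩
  obtain ⟨⟨⟨hn1, hn2⟩, ⟨hn3, hn4⟩⟩, hn5⟩ := hN n (by omega)
  rw [hgoalC]
  have hn1R : (1:ℝ) ≤ (n:ℝ) := by exact_mod_cast hn1
  have hn0R : (0:ℝ) < (n:ℝ) := by linarith
  have hlogn : 0 ≤ Real.log n := Real.log_nonneg hn1R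
  have hε2 : (0:ℝ) < 1 - ε/2 := by linarith
  -- parameters
  set k₀ : ℕ := ⌊(1 - ε/2) * C * Real.log n⌋₊ with hk₀def
  set T : ℕ := ⌊(n:ℝ) ^ ((ε/16 : ℝ))⌋₊ with hTdef
  set K : ℕ := (t - (s-2)) * k₀ / t with hKdef
  have hk₀le : (k₀:ℝ) ≤ (1 - ε/2) * C * Real.log n := Nat.floor_le (by positivity)
  have hTle : (T:ℝ) ≤ (n:ℝ)^((ε/16:ℝ)) := Nat.floor_le (Real.rpow_nonneg hn0R.le _)
  have hT1ge : (n:ℝ)^((ε/16:ℝ)) ≤ (T:ℝ) + 1 := le_of_lt (Nat.lt_floor_add_one _)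
  have hT1 : 1 ≤ T := by
    apply Nat.le_floor
    rw [Nat.cast_one]
    calc (1:ℝ) = (1:ℝ) ^ ((ε/16:ℝ)) := (Real.one_rpow _).symm
      _ ≤ (n:ℝ)^((ε/16:ℝ)) := Real.rpow_le_rpow (by norm_num) hn1R (by linarith)
  -- K ≤ k₀ ≤ n
  have hKk₀ : K ≤ k₀ := by
    rw [hKdef]
    calc (t - (s-2)) * k₀ / t ≤ t * k₀ / t :=
          Nat.div_le_div_right (Nat.mul_le_mul_right _ (by omega))
      _ = k₀ := Nat.mul_div_cancel_left _ ht0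
  have hk₀n : k₀ ≤ n := by
    have h1 : (k₀:ℝ) ≤ C * Real.log n := by nlinarith [mul_nonneg hC0.le hlogn]
    have h2 : C * Real.log n ≤ C * ((n:ℝ)/(C+1)) := by gcongr
    have h3 : C * ((n:ℝ)/(C+1)) ≤ (n:ℝ) := by
      have h4 : C/(C+1) ≤ 1 := by
        rw [div_le_one (by linarith)]; linarith
      calc C * ((n:ℝ)/(C+1)) = (n:ℝ) * (C/(C+1)) := by ring
        _ ≤ (n:ℝ) * 1 := by gcongr
        _ = (n:ℝ) := mul_one _
    have : (k₀:ℝ) ≤ (n:ℝ) := by linarith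
    exact_mod_cast this
  have hKn : K ≤ n := le_trans hKk₀ hk₀n
  -- power bound
  have hβpos : (0:ℝ) < (β:ℝ) := by linarith
  have hKcast : (K:ℝ) ≤ (β:ℝ) * (k₀:ℝ) / t := by
    have h0 : K = β * k₀ / t := by rw [hKdef, hβdef]
    rw [h0]
    calc ((β * k₀ / t : ℕ):ℝ) ≤ ((β*k₀ : ℕ):ℝ)/((t:ℕ):ℝ) := Nat.cast_div_le
      _ = (β:ℝ)*(k₀:ℝ)/(t:ℝ) := by push_cast; ring
  have htR : (0:ℝ) < (t:ℝ) := by exact_mod_cast ht0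
  have hKlog : (K:ℝ) * Real.log β ≤ (1 - ε/2) * Real.log n := by
    have h1 : (K:ℝ) * Real.log β ≤ ((β:ℝ)*(k₀:ℝ)/t) * Real.log β :=
      mul_le_mul_of_nonneg_right hKcast hlogβ.le
    have h2 : ((β:ℝ)*(k₀:ℝ)/t) * Real.log β
        ≤ ((β:ℝ)*((1-ε/2)*C*Real.log n)/t) * Real.log β := by
      gcongr
    have h4 : C * ((β:ℝ)*Real.log β) / (t:ℝ) = 1 := by
      rw [hCβ]; exact div_self (ne_of_gt htR)
    have h3 : ((β:ℝ)*((1-ε/2)*C*Real.log n)/t) * Real.log β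
        = ((1-ε/2)*Real.log n) * (C * ((β:ℝ)*Real.log β) / (t:ℝ)) := by ring
    rw [h3, h4, mul_one] at h2
    linarith
  have hβKle : ((β:ℝ))^K ≤ (n:ℝ)^((1 - ε/2 : ℝ)) := by
    rw [← Real.rpow_natCast (β:ℝ) K, Real.rpow_def_of_pos hβpos, Real.rpow_def_of_pos hn0R]
    apply Real.exp_le_exp.mpr
    calc Real.log (β:ℝ) * (K:ℝ) = (K:ℝ) * Real.log β := by ring
      _ ≤ (1-ε/2) * Real.log n := hKlog
      _ = Real.log n * (1-ε/2) := by ring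
  -- Q bound
  set Q : ℕ := Nat.choose t (s-2) * ((T*T+T+1) * (t - (s-2)) ^ ((t - (s-2)) * k₀ / t)) with hQdef
  have hQcast : (Q:ℝ) = C₁ * ((T:ℝ)*(T:ℝ)+(T:ℝ)+1) * ((β:ℝ))^K := by
    rw [hQdef, hC₁def]
    have h0 : (t - (s-2)) ^ ((t - (s-2)) * k₀ / t) = β ^ K := by rw [← hβdef, ← hKdef]
    rw [h0]
    push_cast
    ring
  have hT1R : (1:ℝ) ≤ (T:ℝ) := by exact_mod_cast hT1
  have hQn : (Q:ℝ) ≤ ε/8 * (n:ℝ) := by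
    have hTT : (T:ℝ)*(T:ℝ)+(T:ℝ)+1 ≤ 3*((T:ℝ)*(T:ℝ)) := by nlinarith
    have hT2 : (T:ℝ)*(T:ℝ) ≤ (n:ℝ)^((ε/8:ℝ)) := by
      calc (T:ℝ)*(T:ℝ) ≤ (n:ℝ)^((ε/16:ℝ)) * (n:ℝ)^((ε/16:ℝ)) := by
            exact mul_le_mul hTle hTle (Nat.cast_nonneg T) (Real.rpow_nonneg hn0R.le _)
        _ = (n:ℝ)^((ε/16:ℝ)+(ε/16:ℝ)) := (Real.rpow_add hn0R _ _).symm
        _ = (n:ℝ)^((ε/8:ℝ)) := by congr 1; ring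
    have hchain : (Q:ℝ) ≤ 3*C₁ * ((n:ℝ)^((ε/8:ℝ)) * (n:ℝ)^((1-ε/2:ℝ))) := by
      rw [hQcast]
      calc C₁ * ((T:ℝ)*(T:ℝ)+(T:ℝ)+1) * ((β:ℝ))^K
          ≤ C₁ * (3*((n:ℝ)^((ε/8:ℝ)))) * ((n:ℝ)^((1-ε/2:ℝ))) := by
            apply mul_le_mul _ hβKle (by positivity) (by positivity)
            apply mul_le_mul_of_nonneg_left _ hC₁0
            linarith
        _ = 3*C₁ * ((n:ℝ)^((ε/8:ℝ)) * (n:ℝ)^((1-ε/2:ℝ))) := by ring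
    have hmerge : (n:ℝ)^((ε/8:ℝ)) * (n:ℝ)^((1-ε/2:ℝ)) = (n:ℝ)^((1-3*ε/8:ℝ)) := by
      rw [← Real.rpow_add hn0R]
      congr 1
      ring
    have hsplit : (n:ℝ) = (n:ℝ)^((3*ε/8:ℝ)) * (n:ℝ)^((1-3*ε/8:ℝ)) := by
      rw [← Real.rpow_add hn0R]
      have hone : 3*ε/8 + (1-3*ε/8) = 1 := by ring
      rw [hone, Real.rpow_one]
    have hfin : 3*C₁ * (n:ℝ)^((1-3*ε/8:ℝ)) ≤ ε/8 * (n:ℝ) := by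
      have h1 : 3*C₁ ≤ ε/8 * (n:ℝ)^((3*ε/8:ℝ)) := by
        have := hn2
        have h2 : ε/8 * (24*(C₁+1)/ε) ≤ ε/8 * (n:ℝ)^((3*ε/8:ℝ)) := by gcongr
        have h3 : ε/8 * (24*(C₁+1)/ε) = 3*(C₁+1) := by field_simp; ring
        linarith
      calc 3*C₁ * (n:ℝ)^((1-3*ε/8:ℝ)) ≤ (ε/8 * (n:ℝ)^((3*ε/8:ℝ))) * (n:ℝ)^((1-3*ε/8:ℝ)) := by
            exact mul_le_mul_of_nonneg_right h1 (Real.rpow_nonneg hn0R.le _)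
        _ = ε/8 * ((n:ℝ)^((3*ε/8:ℝ)) * (n:ℝ)^((1-3*ε/8:ℝ))) := by ring
        _ = ε/8 * (n:ℝ) := by rw [← hsplit]
    calc (Q:ℝ) ≤ 3*C₁ * ((n:ℝ)^((ε/8:ℝ)) * (n:ℝ)^((1-ε/2:ℝ))) := hchain
      _ = 3*C₁ * (n:ℝ)^((1-3*ε/8:ℝ)) := by rw [hmerge]
      _ ≤ ε/8 * (n:ℝ) := hfin
  -- F4
  have hF4 : 2*(k₀:ℝ) ≤ ε/8*((T:ℝ)+1) := by
    have hA : 2*(k₀:ℝ) ≤ 2*(C*Real.log n) := by nlinarith [mul_nonneg hC0.le hlogn]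
    have hBc : 2*(C*Real.log n) ≤ (ε/8) * (n:ℝ)^((ε/16:ℝ)) := by
      have h0 : (0:ℝ) < 2*C+1 := by linarith
      have key : 2*C*(ε/(8*(2*C+1))) = (2*C/(2*C+1)) * (ε/8) := by field_simp
      have hle1 : 2*C/(2*C+1) ≤ 1 := by rw [div_le_one h0]; linarith
      calc 2*(C*Real.log n) ≤ 2*(C*((ε/(8*(2*C+1))) * (n:ℝ)^((ε/16:ℝ)))) := by gcongr
        _ = (2*C*(ε/(8*(2*C+1)))) * (n:ℝ)^((ε/16:ℝ)) := by ring
        _ = ((2*C/(2*C+1)) * (ε/8)) * (n:ℝ)^((ε/16:ℝ)) := by rw [key]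
        _ ≤ (1 * (ε/8)) * (n:ℝ)^((ε/16:ℝ)) := by
            apply mul_le_mul_of_nonneg_right _ (Real.rpow_nonneg hn0R.le _)
            apply mul_le_mul_of_nonneg_right hle1 (by positivity)
        _ = (ε/8) * (n:ℝ)^((ε/16:ℝ)) := by ring
    calc 2*(k₀:ℝ) ≤ (ε/8) * (n:ℝ)^((ε/16:ℝ)) := by linarith
      _ ≤ ε/8*((T:ℝ)+1) := by gcongr
  -- F5
  have hF5 : (1-3*ε/4)*C*Real.log n ≤ (k₀:ℝ) := by
    have hfl : (1-ε/2)*C*Real.log n - 1 < (k₀:ℝ) := by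
      have := Nat.lt_floor_add_one ((1-ε/2)*C*Real.log n)
      rw [← hk₀def] at this
      linarith
    have h1 : (0:ℝ) < ε*C := by positivity
    have hεC : 1 ≤ (ε/4)*C*Real.log n := by
      have h2 : 4/(ε*C) ≤ Real.log n := by linarith
      have h3 : (ε/4)*C*(4/(ε*C)) = 1 := by field_simp
      have h5 : (0:ℝ) ≤ (ε/4)*C := by positivity
      have h4 := mul_le_mul_of_nonneg_left h2 h5
      nlinarith [h4]
    nlinarith
  have hKn' : (t - (s-2)) * k₀ / t ≤ n := by rw [← hKdef]; exact hKn
  clear_value k₀ T K Q β C C₁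
  -- the saturated graph attaining the infimum
  have hSne : Set.Nonempty { m | ∃ (G : SimpleGraph (Fin n)) (c : Sym2 (Fin n) → Fin t),
      RainbowCliqueSaturated s G c ∧ G.edgeSet.ncard = m } :=
    ⟨(⊤ : SimpleGraph (Fin n)).edgeSet.ncard, ⊤, (fun _ => ⟨0, ht0⟩), sat_top hs ht0 n, rfl⟩
  obtain ⟨G, c, hsat, hcard⟩ := Nat.sInf_mem hSne
  letI : DecidableRel G.Adj := Classical.decRel _
  have he : G.edgeSet.ncard = G.edgeFinset.card := by
    rw [Set.ncard_eq_toFinset_card']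
    exact congrArg Finset.card (by ext x; simp)
  obtain ⟨H, Bd, Gd, hnHBG, hH, hBd, hGd⟩ := RSat.main_nat G c hs hst hsat T k₀ hKn'
  obtain ⟨e, he2⟩ : ∃ m : ℕ, G.edgeFinset.card = m := ⟨_, rfl⟩
  rw [he2] at hH hGd
  have h0 : rsatClique s t n = e := by
    rw [rsatClique, ← hcard, he, he2]
  rw [h0]
  have hx0 : (0:ℝ) ≤ (e:ℝ) := Nat.cast_nonneg e
  have hnRR : (n:ℝ) = (H:ℝ) + (Bd:ℝ) + (Gd:ℝ) := by exact_mod_cast hnHBG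
  have hHR : ((T:ℝ)+1)*(H:ℝ) ≤ 2*(e:ℝ) := by exact_mod_cast hH
  have hBdR : (Bd:ℝ) ≤ (Q:ℝ) := by
    have hq : Bd ≤ Q := by rw [hQdef]; exact hBd
    exact_mod_cast hq
  have hGdR : ((k₀:ℝ)+1)*(Gd:ℝ) ≤ (e:ℝ) := by exact_mod_cast hGd
  clear! G c
  clear h0
  have hH0 : (0:ℝ) ≤ (H:ℝ) := Nat.cast_nonneg H
  have hGd0 : (0:ℝ) ≤ (Gd:ℝ) := Nat.cast_nonneg Gd
  have hk₀0 : (0:ℝ) ≤ (k₀:ℝ) := Nat.cast_nonneg k₀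
  have hKH : (k₀:ℝ)*(H:ℝ) ≤ ε/8*(e:ℝ) := by
    have h1 : (2*(k₀:ℝ))*(H:ℝ) ≤ (ε/8*((T:ℝ)+1))*(H:ℝ) :=
      mul_le_mul_of_nonneg_right hF4 hH0
    have h2 : (ε/8)*(((T:ℝ)+1)*(H:ℝ)) ≤ (ε/8)*(2*(e:ℝ)) :=
      mul_le_mul_of_nonneg_left hHR (by positivity)
    linarith only [h1, h2]
  have hsum : (k₀:ℝ)*(n:ℝ) ≤ ε/8*(e:ℝ) + (k₀:ℝ)*(ε/8*(n:ℝ)) + (e:ℝ) := by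
    have e1 : (k₀:ℝ)*(n:ℝ) = (k₀:ℝ)*(H:ℝ) + (k₀:ℝ)*(Bd:ℝ) + (k₀:ℝ)*(Gd:ℝ) := by
      rw [hnRR]; ring
    have e2 : (k₀:ℝ)*(Bd:ℝ) ≤ (k₀:ℝ)*(ε/8*(n:ℝ)) :=
      mul_le_mul_of_nonneg_left (le_trans hBdR hQn) hk₀0
    have e3 : (k₀:ℝ)*(Gd:ℝ) ≤ (e:ℝ) := by linarith only [hGdR, hGd0]
    linarith only [e1, e2, e3, hKH]
  have hstep1 : (k₀:ℝ)*(n:ℝ)*(1 - ε/8) ≤ (1 + ε/8)*(e:ℝ) := by linarith only [hsum]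
  have hfinal : (1-ε)*C*(n:ℝ)*Real.log n ≤ (e:ℝ) := by
    have hquad : (1-ε)*(1+ε/8) ≤ (1-3*ε/4)*(1-ε/8) := by nlinarith only [sq_nonneg ε, hε.le]
    have hbase : (0:ℝ) ≤ C*(n:ℝ)*Real.log n :=
      mul_nonneg (mul_nonneg hC0.le hn0R.le) hlogn
    have h1' := mul_le_mul_of_nonneg_right hquad hbase
    have h1 : (1-ε)*C*(n:ℝ)*Real.log n * (1+ε/8)
        ≤ ((1-3*ε/4)*C*Real.log n)*((n:ℝ)*(1-ε/8)) := by linarith only [h1']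
    have hf : (0:ℝ) ≤ (n:ℝ)*(1-ε/8) := mul_nonneg hn0R.le (by linarith only [hε1])
    have h2 : ((1-3*ε/4)*C*Real.log n)*((n:ℝ)*(1-ε/8)) ≤ (k₀:ℝ)*((n:ℝ)*(1-ε/8)) :=
      mul_le_mul_of_nonneg_right hF5 hf
    have h3 : (k₀:ℝ)*((n:ℝ)*(1-ε/8)) ≤ (1+ε/8)*(e:ℝ) := by linarith only [hstep1]
    have h4 : (1+ε/8) * ((1-ε)*C*(n:ℝ)*Real.log n) ≤ (1+ε/8)*(e:ℝ) := by
      linarith only [h1, h2, h3]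
    exact le_of_mul_le_mul_left h4 (by linarith only [hε])
  exact hfinal
end
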